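/- arXiv:2408.07169 — 2 statements merged into one kernel-verified Lean document; each statement's English description precedes it below -/
import Mathlib

section
/- For every real h > 0, F(3, h) < 0; that is, 3·tanh(h)^{1/2} − 4^{1/4}·tanh(2h)^{1/2} − 7^{1/4}·tanh(7^{1/2}·h)^{1/2} < 0. -/
noncomputable def F (β h : ℝ) : ℝ :=
  3 * Real.sqrt (Real.tanh h)
    - (1 + β) ^ ((1 : ℝ) / 4) * Real.sqrt (Real.tanh (h * Real.sqrt (1 + β)))
    - (4 + β) ^ ((1 : ℝ) / 4) * Real.sqrt (Real.tanh (h * Real.sqrt (4 + β)))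

lemma tanh_mono : StrictMono Real.tanh := by
  intro a b hab
  rw [Real.tanh_eq_sinh_div_cosh, Real.tanh_eq_sinh_div_cosh,
    div_lt_div_iff₀ (Real.cosh_pos a) (Real.cosh_pos b)]
  nlinarith [Real.sinh_pos_iff.2 (sub_pos.2 hab), Real.sinh_sub b a,
    Real.cosh_pos a, Real.cosh_pos b]

lemma tanh_pos {x : ℝ} (hx : 0 < x) : 0 < Real.tanh x := by
  simpa using tanh_mono hx

lemma aux (h : ℝ) (hh : 0 < h) :
    3 * Real.sqrt (Real.tanh h)
      - (4 : ℝ) ^ ((1 : ℝ) / 4) * Real.sqrt (Real.tanh (2 * h))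
      - (7 : ℝ) ^ ((1 : ℝ) / 4) * Real.sqrt (Real.tanh (Real.sqrt 7 * h)) < 0 := by
  set t := Real.sqrt (Real.tanh h) with ht
  have ht0 : 0 < t := Real.sqrt_pos.2 (tanh_pos hh)
  have h7 : (1 : ℝ) < Real.sqrt 7 := by
    rw [show (1:ℝ) = Real.sqrt 1 by simp]
    exact Real.sqrt_lt_sqrt (by norm_num) (by norm_num)
  have h1 : t ≤ Real.sqrt (Real.tanh (2 * h)) :=
    Real.sqrt_le_sqrt (tanh_mono (by linarith)).le
  have h2 : t ≤ Real.sqrt (Real.tanh (Real.sqrt 7 * h)) :=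
    Real.sqrt_le_sqrt (tanh_mono (by nlinarith)).le
  set a := (4 : ℝ) ^ ((1 : ℝ) / 4) with ha
  set b := (7 : ℝ) ^ ((1 : ℝ) / 4) with hb
  have ha0 : 0 ≤ a := Real.rpow_nonneg (by norm_num) _
  have hb0 : 0 ≤ b := Real.rpow_nonneg (by norm_num) _
  have ha4 : a ^ (4 : ℕ) = 4 := by
    rw [ha, ← Real.rpow_natCast ((4:ℝ) ^ ((1:ℝ)/4)) 4, ← Real.rpow_mul (by norm_num)]
    norm_num
  have hb4 : b ^ (4 : ℕ) = 7 := by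
    rw [hb, ← Real.rpow_natCast ((7:ℝ) ^ ((1:ℝ)/4)) 4, ← Real.rpow_mul (by norm_num)]
    norm_num
  have hA : (1.41 : ℝ) < a := by
    by_contra hc
    push_neg at hc
    have := pow_le_pow_left₀ ha0 hc 4
    rw [ha4] at this
    norm_num at this
  have hB : (1.62 : ℝ) < b := by
    by_contra hc
    push_neg at hc
    have := pow_le_pow_left₀ hb0 hc 4
    rw [hb4] at this
    norm_num at this
  have hab : 3 < a + b := by linarith
  have := mul_le_mul_of_nonneg_left h1 ha0
  have := mul_le_mul_of_nonneg_left h2 hb0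
  nlinarith

/-- `F(3,h) < 0` for all `h > 0`, explicitly
`3 tanh(h)^{1/2} − 4^{1/4} tanh(2h)^{1/2} − 7^{1/4} tanh(√7 h)^{1/2} < 0`. -/
theorem stmt2 (h : ℝ) (hh : 0 < h) :
    F 3 h < 0 ∧
    3 * Real.sqrt (Real.tanh h)
      - (4 : ℝ) ^ ((1 : ℝ) / 4) * Real.sqrt (Real.tanh (2 * h))
      - (7 : ℝ) ^ ((1 : ℝ) / 4) * Real.sqrt (Real.tanh (Real.sqrt 7 * h)) < 0 := by
  refine ⟨?_, aux h hh⟩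
  have h4 : Real.sqrt (1 + 3 : ℝ) = 2 := by
    rw [show (1 + 3 : ℝ) = 2 ^ 2 by norm_num, Real.sqrt_sq (by norm_num)]
  have := aux h hh
  unfold F
  rw [show (1 + 3 : ℝ) = 4 by norm_num, show (4 + 3 : ℝ) = 7 by norm_num,
    show Real.sqrt 4 = 2 from by rw [show (4:ℝ) = 2^2 by norm_num, Real.sqrt_sq (by norm_num)],
    mul_comm h 2, mul_comm h (Real.sqrt 7)]
  exact this
end

section
/- Let b : ℝ → ℝ be any function such that for every h > 0 one has 0 < b(h) < 3 and F(b(h), h) = 0, and let β∞ be the unique β > 0 satisfying 3 − (1+β)^{1/4} − (4+β)^{1/4} = 0. Then b(h) → β∞ as h → ∞. -/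
open Real Filter

lemma tanh_formula (x : ℝ) :
    Real.tanh x = (1 - Real.exp (-(2*x))) / (1 + Real.exp (-(2*x))) := by
  have h1 : Real.exp x * Real.exp (-x) = 1 := by
    rw [← Real.exp_add]; simp
  have h2 : Real.exp (-(2*x)) = Real.exp (-x) * Real.exp (-x) := by
    rw [← Real.exp_add]; ring_nf
  have hex : (0:ℝ) < Real.exp x := Real.exp_pos _
  have henx : (0:ℝ) < Real.exp (-x) := Real.exp_pos _
  have hd : (0:ℝ) < 1 + Real.exp (-(2*x)) := by positivity
  rw [Real.tanh_eq_sinh_div_cosh, Real.sinh_eq, Real.cosh_eq, h2]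
  rw [div_eq_div_iff (by positivity) (by positivity)]
  nlinarith [h1]

lemma tanh_lt_one (x : ℝ) : Real.tanh x < 1 := by
  rw [tanh_formula]
  have hg : (0:ℝ) < Real.exp (-(2*x)) := Real.exp_pos _
  rw [div_lt_one (by positivity)]
  linarith

lemma tanh_nonneg {x : ℝ} (hx : 0 ≤ x) : 0 ≤ Real.tanh x := by
  rw [tanh_formula]
  have hg : Real.exp (-(2*x)) ≤ 1 := Real.exp_le_one_iff.2 (by linarith)
  have : (0:ℝ) < 1 + Real.exp (-(2*x)) := by positivity
  apply div_nonneg (by linarith) this.le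

lemma tanh_mono_s7 {x y : ℝ} (hxy : x ≤ y) : Real.tanh x ≤ Real.tanh y := by
  rw [tanh_formula, tanh_formula]
  have hgx : (0:ℝ) < Real.exp (-(2*x)) := Real.exp_pos _
  have hgy : (0:ℝ) < Real.exp (-(2*y)) := Real.exp_pos _
  have hle : Real.exp (-(2*y)) ≤ Real.exp (-(2*x)) := Real.exp_le_exp.2 (by linarith)
  rw [div_le_div_iff₀ (by positivity) (by positivity)]
  nlinarith

lemma tanh_tendsto : Tendsto Real.tanh atTop (nhds 1) := by
  have hg : Tendsto (fun x : ℝ => Real.exp (-(2*x))) atTop (nhds 0) := by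
    apply Real.tendsto_exp_atBot.comp
    have h2 : Tendsto (fun x : ℝ => 2*x) atTop atTop :=
      tendsto_id.const_mul_atTop two_pos
    exact tendsto_neg_atTop_atBot.comp h2
  have hone : Tendsto (fun _ : ℝ => (1:ℝ)) atTop (nhds 1) := tendsto_const_nhds
  have h := (hone.sub hg).div (hone.add hg) (by norm_num)
  simp only [sub_zero, add_zero, div_one] at h
  exact h.congr fun x => (tanh_formula x).symm

lemma term_mono {h c x y : ℝ} (hh : 0 < h) (hc : 0 < c) (hx : 0 ≤ x) (hxy : x ≤ y) :
    (c + x) ^ ((1:ℝ)/4) * Real.sqrt (Real.tanh (h * Real.sqrt (c + x)))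
      ≤ (c + y) ^ ((1:ℝ)/4) * Real.sqrt (Real.tanh (h * Real.sqrt (c + y))) := by
  have h1 : (c + x) ^ ((1:ℝ)/4) ≤ (c + y) ^ ((1:ℝ)/4) :=
    Real.rpow_le_rpow (by positivity) (by linarith) (by norm_num)
  have h2 : Real.sqrt (Real.tanh (h * Real.sqrt (c + x)))
      ≤ Real.sqrt (Real.tanh (h * Real.sqrt (c + y))) := by
    apply Real.sqrt_le_sqrt
    apply tanh_mono_s7
    exact mul_le_mul_of_nonneg_left (Real.sqrt_le_sqrt (by linarith)) hh.le
  exact mul_le_mul h1 h2 (Real.sqrt_nonneg _) (Real.rpow_nonneg (by linarith) _)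

lemma F_anti {h x y : ℝ} (hh : 0 < h) (hx : 0 ≤ x) (hxy : x ≤ y) : F y h ≤ F x h := by
  unfold F
  have t1 := term_mono (c := 1) hh one_pos hx hxy
  have t4 := term_mono (c := 4) hh four_pos hx hxy
  linarith

lemma F_tendsto (β : ℝ) (hβ : 0 ≤ β) :
    Tendsto (fun h => F β h) atTop
      (nhds (3 - (1 + β) ^ ((1:ℝ)/4) - (4 + β) ^ ((1:ℝ)/4))) := by
  have hs : Tendsto (fun h : ℝ => Real.sqrt (Real.tanh h)) atTop (nhds 1) := by
    have := (Real.continuous_sqrt.tendsto 1).comp tanh_tendsto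
    simpa [Function.comp_def] using this
  have hterm : ∀ c : ℝ, 0 < c →
      Tendsto (fun h : ℝ => Real.sqrt (Real.tanh (h * Real.sqrt (c + β)))) atTop (nhds 1) := by
    intro c hc
    apply hs.comp
    exact tendsto_id.atTop_mul_const (Real.sqrt_pos.2 (by linarith))
  have h1 := hterm 1 one_pos
  have h4 := hterm 4 four_pos
  have := ((hs.const_mul 3).sub (h1.const_mul ((1 + β) ^ ((1:ℝ)/4)))).sub
      (h4.const_mul ((4 + β) ^ ((1:ℝ)/4)))
  simpa [F] using this

/-- If `b h ∈ (0,3)` solves `F (b h) h = 0` for every `h > 0`, and `βinf` is the unique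
positive root of `3 − (1+β)^{1/4} − (4+β)^{1/4} = 0`, then `b h → βinf` as `h → ∞`. -/
theorem stmt7 (b : ℝ → ℝ)
    (hb : ∀ h : ℝ, 0 < h → 0 < b h ∧ b h < 3 ∧ F (b h) h = 0)
    (βinf : ℝ) (hβpos : 0 < βinf)
    (hβroot : 3 - (1 + βinf) ^ ((1 : ℝ) / 4) - (4 + βinf) ^ ((1 : ℝ) / 4) = 0)
    (hβuniq : ∀ β : ℝ, 0 < β →
      3 - (1 + β) ^ ((1 : ℝ) / 4) - (4 + β) ^ ((1 : ℝ) / 4) = 0 → β = βinf) :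
    Filter.Tendsto b Filter.atTop (nhds βinf) := by
  rw [tendsto_order]
  constructor
  · intro a ha
    rcases le_or_gt a 0 with h0 | h0
    · filter_upwards [eventually_gt_atTop (0:ℝ)] with h hh
      linarith [(hb h hh).1]
    · have hGa : 0 < 3 - (1 + a) ^ ((1:ℝ)/4) - (4 + a) ^ ((1:ℝ)/4) := by
        have h1 : (1 + a) ^ ((1:ℝ)/4) < (1 + βinf) ^ ((1:ℝ)/4) :=
          Real.rpow_lt_rpow (by linarith) (by linarith) (by norm_num)
        have h4 : (4 + a) ^ ((1:ℝ)/4) < (4 + βinf) ^ ((1:ℝ)/4) :=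
          Real.rpow_lt_rpow (by linarith) (by linarith) (by norm_num)
        linarith
      have hev := (F_tendsto a h0.le).eventually_const_lt hGa
      filter_upwards [hev, eventually_gt_atTop (0:ℝ)] with h hFh hh
      by_contra hle
      push_neg at hle
      obtain ⟨hb1, hb2, hb3⟩ := hb h hh
      have := F_anti hh hb1.le hle
      rw [hb3] at this
      linarith
  · intro a ha
    rcases le_or_gt 3 a with h3 | h3
    · filter_upwards [eventually_gt_atTop (0:ℝ)] with h hh
      linarith [(hb h hh).2.1]
    · have ha0 : 0 < a := lt_trans hβpos ha
      have hGa : 3 - (1 + a) ^ ((1:ℝ)/4) - (4 + a) ^ ((1:ℝ)/4) < 0 := by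
        have h1 : (1 + βinf) ^ ((1:ℝ)/4) < (1 + a) ^ ((1:ℝ)/4) :=
          Real.rpow_lt_rpow (by linarith) (by linarith) (by norm_num)
        have h4 : (4 + βinf) ^ ((1:ℝ)/4) < (4 + a) ^ ((1:ℝ)/4) :=
          Real.rpow_lt_rpow (by linarith) (by linarith) (by norm_num)
        linarith
      have hev := (F_tendsto a ha0.le).eventually_lt_const hGa
      filter_upwards [hev, eventually_gt_atTop (0:ℝ)] with h hFh hh
      by_contra hle
      push_neg at hle
      obtain ⟨hb1, hb2, hb3⟩ := hb h hh
      have := F_anti hh ha0.le hle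
      rw [hb3] at this
      linarith
end
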